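/- If φ is a skeleton on M, then for every s ∈ ℝ and δ > 0 the set {φ_n(s) : n ∈ ℕ, s − δ < s_n ≤ s} contains points arbitrarily close to any point of M, i.e. {φ_n(s) : n ∈ I^s \ I^{s−δ}} is dense in M. -/

import Mathlib

/-! Paths born at times in `(r - δ, r)` near `x` exist by (Sk2), and by (Sk3) their
restrictions from their birth times lie in a compact set of paths. Evaluation at the birth
time is continuous, so some limit path is born at `(r, x)`; its value at time `r` is `x`,
and by continuity of evaluation at `r` the values at `r` of the approximating paths
accumulate at `x`. -/

open Set Filter

variable {M : Type*} [MetricSpace M] [ProperSpace M] [TopologicalSpace.SeparableSpace M]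

/-- The restriction of the path `f` (with starting time `r`) as an element of the path
space `X`, represented as a pair of a starting time and a continuous map `ℝ → M`
constant before the starting time. -/
noncomputable def restrictPath (f : C(ℝ, M)) (r : ℝ) : ℝ × C(ℝ, M) :=
  (r, f.comp ⟨fun t => max r t, continuous_const.max continuous_id⟩)

omit [ProperSpace M] [TopologicalSpace.SeparableSpace M] in
@[simp]
theorem restrictPath_fst (f : C(ℝ, M)) (r : ℝ) : (restrictPath f r).1 = r := rfl

omit [ProperSpace M] [TopologicalSpace.SeparableSpace M] in
@[simp]
theorem restrictPath_snd_apply (f : C(ℝ, M)) (r t : ℝ) :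
    (restrictPath f r).2 t = f (max r t) := rfl

theorem Dense.right_mem_closure_inter_Ioo_prod {Y : Type*} [TopologicalSpace Y]
    {D : Set (ℝ × Y)} (hD : Dense D) {a b : ℝ} (hab : a < b) {U : Set Y} (hU : IsOpen U)
    {y : Y} (hy : y ∈ U) : (b, y) ∈ closure (D ∩ Ioo a b ×ˢ U) := by
  rw [inter_comm]
  refine closure_minimal (hD.open_subset_closure_inter (isOpen_Ioo.prod hU)) isClosed_closure ?_
  rw [closure_prod_eq, closure_Ioo hab.ne]
  exact ⟨right_mem_Icc.2 hab.le, subset_closure hy⟩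

omit [ProperSpace M] [TopologicalSpace.SeparableSpace M] in
theorem isCompact_closure_restrictPath_birth {s : ℕ → ℝ} {φ : ℕ → C(ℝ, M)}
    (hSk3 : ∀ L : Set (ℝ × M), IsCompact L →
      IsCompact (closure {p : ℝ × C(ℝ, M) | ∃ n r, s n ≤ r ∧ (r, φ n r) ∈ L ∧
        p = restrictPath (φ n) r}))
    {L : Set (ℝ × M)} (hL : IsCompact L) {B : Set ℕ} (hB : ∀ n ∈ B, (s n, φ n (s n)) ∈ L) :
    IsCompact (closure ((fun n => restrictPath (φ n) (s n)) '' B)) := by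
  refine (hSk3 L hL).of_isClosed_subset isClosed_closure (closure_mono ?_)
  rintro _ ⟨n, hn, rfl⟩
  exact ⟨n, s n, le_rfl, hB n hn, rfl⟩

theorem skeleton_past_dense
    (s : ℕ → ℝ) (φ : ℕ → C(ℝ, M))
    (hSk2 : Dense {q : ℝ × M | ∃ n, q = (s n, φ n (s n))})
    (hSk3 : ∀ L : Set (ℝ × M), IsCompact L →
      IsCompact (closure {p : ℝ × C(ℝ, M) | ∃ n r, s n ≤ r ∧ (r, φ n r) ∈ L ∧
        p = restrictPath (φ n) r})) :
    ∀ (r δ : ℝ), 0 < δ →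
      Dense {y : M | ∃ n, r - δ < s n ∧ s n ≤ r ∧ y = φ n r} := by
  intro r δ hδ x
  set B := {n | (s n, φ n (s n)) ∈ Ioo (r - δ) r ×ˢ Metric.ball x 1}
  set S := (fun n => restrictPath (φ n) (s n)) '' B
  have hS : IsCompact (closure S) :=
    isCompact_closure_restrictPath_birth hSk3 (isCompact_Icc.prod (isCompact_closedBall x 1))
      fun n hn => ⟨Ioo_subset_Icc_self hn.1, Metric.ball_subset_closedBall hn.2⟩
  have hbirth : (r, x) ∈ closure ((fun p : ℝ × C(ℝ, M) => (p.1, p.2 p.1)) '' S) := by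
    refine closure_mono ?_ (hSk2.right_mem_closure_inter_Ioo_prod (sub_lt_self r hδ)
      Metric.isOpen_ball (Metric.mem_ball_self one_pos))
    rintro _ ⟨⟨n, rfl⟩, hn⟩
    exact ⟨_, ⟨n, hn, rfl⟩, by simp⟩
  rw [← image_closure_of_isCompact hS (by fun_prop)] at hbirth
  obtain ⟨p, hp, hpx⟩ := hbirth
  have hx : p.2 r = x := by
    simp only [Prod.mk.injEq] at hpx
    rw [← hpx.1, hpx.2]
  refine closure_mono ?_ (image_closure_subset_closure_image (f := fun p : ℝ × C(ℝ, M) => p.2 r)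
    (by fun_prop) ⟨p, hp, hx⟩)
  rintro _ ⟨_, ⟨n, hn, rfl⟩, rfl⟩
  exact ⟨n, hn.1.1, hn.1.2.le, by simp [max_eq_right hn.1.2.le]⟩
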